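/- Let θ ∈ (0,1), δ₁ ∈ (0,1], and t > 0. Let F(x,y) = F₁(|y - c_I|)·F₂(|x-y|)·F₃(1 + |x+y|/(1+|x-y|)) with F₁ bounded increasing, F₂, F₃ bounded decreasing. Let I, J be dyadic intervals with rd(I,J) < 1 and define ird(I,J) := 1 + dist(I,J)/ℓ(J). Then for δ₀ := min{θ, δ₁ - θ} (assuming θ < δ₁), ∫_I ∫_{J \ 3I} (ℓ(I)/|x-y|)^{δ₁} · (t|x-y| + 1/(t|x-y|))^{-θ} · F(x,y)/|x-y| dx dy ≤ C · [F₁(ℓ(I)) F₂(ℓ(I)) F̃₃(I∨J)] · ird(I,J)^{-δ₀} · |I| · (t|I| + (t|I|)^{-1})^{-θ}, where F̃₃(I∨J) := Σ_{k≥0} 2^{-kθ₃} F₃(rd(2^k(I∨J), 𝕀)) for any fixed θ₃ ∈ (0,1), and C is independent of t, I, J. -/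
import Mathlib


open MeasureTheory Set

/-- distance between the intervals `(a,b]` and `(c,d]` on the real line. -/
noncomputable def intervalDist (a b c d : ℝ) : ℝ := max 0 (max (c - b) (a - d))

/-- relative distance `rd(I,J) = dist(I,J)/max(ℓ(I),ℓ(J))` for `I = (a,b]`, `J = (c,d]`. -/
noncomputable def relDist (a b c d : ℝ) : ℝ := intervalDist a b c d / max (b - a) (d - c)

/-- relative distance to the unit interval `𝕀 = [-1/2,1/2]`:
`rd(K,𝕀) = dist(K,𝕀)/max(ℓ(K),1)` for `K = (lo,hi]`. -/
noncomputable def rdUnit (lo hi : ℝ) : ℝ :=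
  max 0 (max (lo - 1 / 2) (-(1 / 2) - hi)) / max (hi - lo) 1

/-- the enlarged decay functional `F̃₃(I∨J) = Σ_{k≥0} 2^{-kθ₃} F₃(rd(2^k(I∨J),𝕀))`,
where `2^k K` is the concentric dilate of `K = (lo,hi]`. -/
noncomputable def dilDecay (θ₃ : ℝ) (F₃ : ℝ → ℝ) (lo hi : ℝ) : ℝ :=
  ∑' k : ℕ, (2:ℝ) ^ (-(k:ℝ) * θ₃) *
    F₃ (rdUnit ((lo + hi) / 2 - (2:ℝ) ^ (k:ℝ) * (hi - lo) / 2)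
          ((lo + hi) / 2 + (2:ℝ) ^ (k:ℝ) * (hi - lo) / 2))

open scoped ENNReal


-- L1: tail integral
lemma lint_Ici_rpow {ε R : ℝ} (hε : 0 < ε) (hR : 0 < R) :
    ∫⁻ u in Ici R, ENNReal.ofReal (u ^ (-(ε+1))) = ENNReal.ofReal (R ^ (-ε) / ε) := by
  have h1 : IntegrableOn (fun u : ℝ => u ^ (-(ε+1))) (Ici R) := by
    rw [integrableOn_Ici_iff_integrableOn_Ioi]
    exact integrableOn_Ioi_rpow_of_lt (by linarith) hR
  have h2 : 0 ≤ᵐ[volume.restrict (Ici R)] fun u : ℝ => u ^ (-(ε+1)) := by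
    filter_upwards [ae_restrict_mem measurableSet_Ici] with u hu
    exact Real.rpow_nonneg (le_trans hR.le hu) _
  rw [← MeasureTheory.ofReal_integral_eq_lintegral_ofReal h1 h2]
  congr 1
  rw [MeasureTheory.integral_Ici_eq_integral_Ioi,
    integral_Ioi_rpow_of_lt (by linarith) hR]
  have : -(ε+1) + 1 = -ε := by ring
  rw [this]
  field_simp


lemma lintegral_comp_neg_real (h : ℝ → ℝ≥0∞) : ∫⁻ x, h (-x) = ∫⁻ x, h x := by
  have hcoe : ⇑(MeasurableEquiv.neg ℝ) = fun x : ℝ => -x := rfl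
  have := MeasureTheory.lintegral_map_equiv (μ := (volume : Measure ℝ)) h (MeasurableEquiv.neg ℝ)
  rw [hcoe, Measure.map_neg_eq_self (volume : Measure ℝ)] at this
  exact this.symm

-- L2: side bound (A)
lemma side_bound {c₀ ε R : ℝ} (hc₀ : 0 ≤ c₀) (hε : 0 < ε) (hR : 0 < R) (y : ℝ)
    {S : Set ℝ} (hSm : MeasurableSet S) (hS : ∀ x ∈ S, R ≤ |x - y|) :
    ∫⁻ x in S, ENNReal.ofReal (c₀ * |x - y| ^ (-(ε+1)))
      ≤ ENNReal.ofReal (2 * c₀ * (R ^ (-ε) / ε)) := by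
  set g : ℝ → ℝ≥0∞ := (Ici R).indicator (fun u => ENNReal.ofReal (c₀ * u ^ (-(ε+1)))) with hg
  have hgm : Measurable g := by
    apply Measurable.indicator _ measurableSet_Ici
    exact ENNReal.measurable_ofReal.comp ((measurable_id.pow measurable_const).const_mul c₀)
  have hpt : ∀ x ∈ S, ENNReal.ofReal (c₀ * |x - y| ^ (-(ε+1))) ≤ g (x - y) + g (y - x) := by
    intro x hx
    rcases le_total y x with h | h
    · have habs : |x - y| = x - y := abs_of_nonneg (by linarith)
      have hmem : x - y ∈ Ici R := by rw [← habs]; exact hS x hx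
      rw [hg]
      rw [indicator_of_mem hmem]
      rw [habs]
      exact le_add_right le_rfl
    · have habs : |x - y| = y - x := by rw [abs_sub_comm]; exact abs_of_nonneg (by linarith)
      have hmem : y - x ∈ Ici R := by rw [← habs]; exact hS x hx
      rw [hg, indicator_of_mem hmem, habs]
      exact le_add_left le_rfl
  calc ∫⁻ x in S, ENNReal.ofReal (c₀ * |x - y| ^ (-(ε+1)))
      ≤ ∫⁻ x in S, (g (x - y) + g (y - x)) := setLIntegral_mono' hSm hpt
    _ ≤ ∫⁻ x, (g (x - y) + g (y - x)) := setLIntegral_le_lintegral _ _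
    _ = (∫⁻ x, g (x - y)) + ∫⁻ x, g (y - x) :=
        lintegral_add_left (hgm.comp (measurable_id.sub_const y)) _
    _ = (∫⁻ u, g u) + ∫⁻ u, g u := by
        congr 1
        · exact lintegral_sub_right_eq_self g y
        · have : (fun x : ℝ => g (y - x)) = fun x => (fun u => g (y + u)) (-x) := by
            funext x; simp [sub_eq_add_neg]
          rw [this, lintegral_comp_neg_real (fun u => g (y + u)),
            lintegral_add_left_eq_self (fun u => g u) y]
    _ = 2 * ∫⁻ u, g u := by rw [two_mul]
    _ = 2 * ∫⁻ u in Ici R, ENNReal.ofReal (c₀ * u ^ (-(ε+1))) := by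
        rw [hg, lintegral_indicator measurableSet_Ici _]
    _ ≤ ENNReal.ofReal (2 * c₀ * (R ^ (-ε) / ε)) := by
        have : ∀ u : ℝ, ENNReal.ofReal (c₀ * u ^ (-(ε+1)))
            = ENNReal.ofReal c₀ * ENNReal.ofReal (u ^ (-(ε+1))) := fun u =>
          ENNReal.ofReal_mul hc₀
        simp_rw [this]
        rw [lintegral_const_mul' _ _ ENNReal.ofReal_ne_top, lint_Ici_rpow hε hR,
          ← ENNReal.ofReal_mul hc₀,
          show ((2:ℝ≥0∞)) = ENNReal.ofReal 2 from by norm_num,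
          ← ENNReal.ofReal_mul (by norm_num : (0:ℝ) ≤ 2)]
        exact le_of_eq (by rw [mul_assoc])





lemma rdUnit_nonneg (lo hi : ℝ) : 0 ≤ rdUnit lo hi := by
  unfold rdUnit
  apply div_nonneg (le_max_left 0 _)
  exact le_trans zero_le_one (le_max_right _ 1)

-- L4
lemma rdUnit_le_arg {lo hi x y : ℝ} (hx : x ∈ Ioc lo hi) (hy : y ∈ Ioc lo hi) :
    rdUnit lo hi ≤ 1 + |x + y| / (1 + |x - y|) := by
  have hxy : |x - y| ≤ hi - lo := by
    rw [abs_sub_le_iff]; constructor <;> [skip; skip] <;>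
      · linarith [hx.1, hx.2, hy.1, hy.2]
  have h1 : (0:ℝ) < 1 + |x - y| := by positivity
  have hden : 1 + |x - y| ≤ 2 * max (hi - lo) 1 := by
    have h2 : |x - y| ≤ max (hi - lo) 1 := le_trans hxy (le_max_left _ _)
    have h3 : (1:ℝ) ≤ max (hi - lo) 1 := le_max_right _ _
    linarith
  have hdpos : (0:ℝ) < max (hi - lo) 1 := lt_of_lt_of_le zero_lt_one (le_max_right _ 1)
  rcases le_or_gt (max (lo - 1 / 2) (-(1 / 2) - hi)) 0 with hN | hN
  · have : rdUnit lo hi = 0 := by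
      unfold rdUnit; rw [max_eq_left hN]; simp
    rw [this]; positivity
  · have hnum : rdUnit lo hi = max (lo - 1 / 2) (-(1 / 2) - hi) / max (hi - lo) 1 := by
      unfold rdUnit; rw [max_eq_right hN.le]
    have key : 2 * max (lo - 1 / 2) (-(1 / 2) - hi) ≤ |x + y| := by
      rcases max_cases (lo - 1 / 2) (-(1 / 2) - hi) with ⟨hm, hle⟩ | ⟨hm, hle⟩
      · rw [hm] at hN ⊢
        have : 2 * lo < x + y := by linarith [hx.1, hy.1]
        have h0 : 0 < x + y := by linarith
        rw [abs_of_pos h0]; linarith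
      · rw [hm] at hN ⊢
        have : x + y ≤ 2 * hi := by linarith [hx.2, hy.2]
        have h0 : x + y < 0 := by linarith
        rw [abs_of_neg h0]; linarith
    rw [hnum]
    have : max (lo - 1 / 2) (-(1 / 2) - hi) / max (hi - lo) 1
        ≤ |x + y| / (1 + |x - y|) := by
      rw [div_le_div_iff₀ hdpos h1]
      calc max (lo - 1 / 2) (-(1 / 2) - hi) * (1 + |x - y|)
          ≤ max (lo - 1 / 2) (-(1 / 2) - hi) * (2 * max (hi - lo) 1) :=
            mul_le_mul_of_nonneg_left hden hN.le
        _ = (2 * max (lo - 1 / 2) (-(1 / 2) - hi)) * max (hi - lo) 1 := by ring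
        _ ≤ |x + y| * max (hi - lo) 1 := mul_le_mul_of_nonneg_right key hdpos.le
    linarith

-- L5
set_option maxHeartbeats 1000000 in
lemma F₃_le_dilDecay {θ₃ : ℝ} (hθ₃ : θ₃ ∈ Set.Ioo (0:ℝ) 1) {F₃ : ℝ → ℝ}
    (h₃0 : ∀ t, 0 ≤ t → 0 ≤ F₃ t) {M : ℝ} (h₃b : ∀ t, 0 ≤ t → F₃ t ≤ M)
    (lo hi : ℝ) : F₃ (rdUnit lo hi) ≤ dilDecay θ₃ F₃ lo hi := by
  set f : ℕ → ℝ := fun k => (2:ℝ) ^ (-(k:ℝ) * θ₃) *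
    F₃ (rdUnit ((lo + hi) / 2 - (2:ℝ) ^ (k:ℝ) * (hi - lo) / 2)
          ((lo + hi) / 2 + (2:ℝ) ^ (k:ℝ) * (hi - lo) / 2)) with hf
  have hnn : ∀ k, 0 ≤ f k := fun k =>
    mul_nonneg (Real.rpow_nonneg (by norm_num) _) (h₃0 _ (rdUnit_nonneg _ _))
  have hq : (0:ℝ) ≤ (2:ℝ) ^ (-θ₃) := Real.rpow_nonneg (by norm_num) _
  have hq1 : (2:ℝ) ^ (-θ₃) < 1 :=
    Real.rpow_lt_one_of_one_lt_of_neg one_lt_two (by linarith [hθ₃.1])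
  have hM : 0 ≤ M := le_trans (h₃0 0 le_rfl) (h₃b 0 le_rfl)
  have hsum : Summable f := by
    refine Summable.of_nonneg_of_le hnn (fun k => ?_)
      ((summable_geometric_of_lt_one hq hq1).mul_right M)
    rw [hf]
    have h2 : (2:ℝ) ^ (-(k:ℝ) * θ₃) = ((2:ℝ) ^ (-θ₃)) ^ k := by
      rw [show (-(k:ℝ) * θ₃) = (-θ₃) * (k:ℝ) by ring, Real.rpow_mul (by norm_num),
        Real.rpow_natCast]
    dsimp only
    rw [h2]
    exact mul_le_mul_of_nonneg_left (h₃b _ (rdUnit_nonneg _ _)) (pow_nonneg hq k)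
  have h0 : f 0 = F₃ (rdUnit lo hi) := by
    rw [hf]
    norm_num
    rw [show (lo + hi) / 2 - (hi - lo) / 2 = lo by ring,
      show (lo + hi) / 2 + (hi - lo) / 2 = hi by ring]
  calc F₃ (rdUnit lo hi) = f 0 := h0.symm
    _ ≤ ∑' k, f k := Summable.le_tsum hsum 0 (fun i _ => hnn i)
    _ = dilDecay θ₃ F₃ lo hi := rfl

-- L6: pointwise bound
lemma pointwise_bound {θ δ₁ t ℓ r f₁ f₂ f₃ g₁ g₂ g₃ : ℝ}
    (hθ : 0 < θ) (hθδ : θ < δ₁) (ht : 0 < t) (hℓ : 0 < ℓ) (hr : ℓ ≤ r)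
    (h1 : 0 ≤ f₁) (h2 : 0 ≤ f₂) (h3 : 0 ≤ f₃)
    (hg1 : f₁ ≤ g₁) (hg2 : f₂ ≤ g₂) (hg3 : f₃ ≤ g₃) :
    (ℓ / r) ^ δ₁ * (t * r + (t * r)⁻¹) ^ (-θ) * (f₁ * f₂ * f₃) / r
      ≤ g₁ * g₂ * g₃ * (t * ℓ + (t * ℓ)⁻¹) ^ (-θ) * (ℓ ^ (δ₁ - θ) * r ^ (-(δ₁ - θ + 1))) := by
  have hr0 : 0 < r := lt_of_lt_of_le hℓ hr
  have htℓ : 0 < t * ℓ + (t * ℓ)⁻¹ := by positivity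
  have hbase : (ℓ / r) * (t * ℓ + (t * ℓ)⁻¹) ≤ t * r + (t * r)⁻¹ := by
    have e1 : ℓ / r * (t * ℓ)⁻¹ = (t * r)⁻¹ := by
      field_simp
    have e2 : ℓ / r * (t * ℓ) ≤ t * r := by
      rw [div_mul_eq_mul_div, div_le_iff₀ hr0]
      nlinarith [mul_le_mul_of_nonneg_left (mul_le_mul hr le_rfl hℓ.le hr0.le) ht.le]
    calc (ℓ / r) * (t * ℓ + (t * ℓ)⁻¹) = ℓ / r * (t * ℓ) + ℓ / r * (t * ℓ)⁻¹ := by ring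
      _ ≤ t * r + (t * r)⁻¹ := by rw [e1]; linarith
  have hW : (t * r + (t * r)⁻¹) ^ (-θ) ≤ (r / ℓ) ^ θ * (t * ℓ + (t * ℓ)⁻¹) ^ (-θ) := by
    have h := Real.rpow_le_rpow_of_nonpos (by positivity) hbase (neg_nonpos.mpr hθ.le)
    rw [Real.mul_rpow (by positivity) htℓ.le] at h
    have : (ℓ / r) ^ (-θ) = (r / ℓ) ^ θ := by
      rw [Real.rpow_neg (by positivity), ← Real.inv_rpow (by positivity), inv_div]
    rwa [this] at h
  have hWpos : 0 ≤ (t * ℓ + (t * ℓ)⁻¹) ^ (-θ) := Real.rpow_nonneg htℓ.le _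
  have hid : (ℓ / r) ^ δ₁ * ((r / ℓ) ^ θ) / r = ℓ ^ (δ₁ - θ) * r ^ (-(δ₁ - θ + 1)) := by
    rw [Real.div_rpow hℓ.le hr0.le, Real.div_rpow hr0.le hℓ.le,
      Real.rpow_sub hℓ, Real.rpow_neg hr0.le, Real.rpow_add hr0, Real.rpow_one]
    have p1 : (0:ℝ) < ℓ ^ θ := Real.rpow_pos_of_pos hℓ θ
    have p2 : (0:ℝ) < r ^ θ := Real.rpow_pos_of_pos hr0 θ
    have p3 : (0:ℝ) < r ^ δ₁ := Real.rpow_pos_of_pos hr0 δ₁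
    have p5 : (0:ℝ) < r ^ (δ₁ - θ) := Real.rpow_pos_of_pos hr0 _
    have hsplit : r ^ δ₁ = r ^ (δ₁ - θ) * r ^ θ := by
      rw [← Real.rpow_add hr0]; ring_nf
    field_simp
    rw [hsplit]
    ring
  have hA : (0:ℝ) ≤ (ℓ / r) ^ δ₁ := Real.rpow_nonneg (by positivity) _
  have hfg : f₁ * f₂ * f₃ ≤ g₁ * g₂ * g₃ :=
    mul_le_mul (mul_le_mul hg1 hg2 h2 (h1.trans hg1)) hg3 h3
      (mul_nonneg (h1.trans hg1) (h2.trans hg2))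
  have hnum : (ℓ / r) ^ δ₁ * (t * r + (t * r)⁻¹) ^ (-θ) * (f₁ * f₂ * f₃)
      ≤ (ℓ / r) ^ δ₁ * ((r / ℓ) ^ θ * (t * ℓ + (t * ℓ)⁻¹) ^ (-θ)) * (g₁ * g₂ * g₃) := by
    apply mul_le_mul (mul_le_mul_of_nonneg_left hW hA) hfg
      (mul_nonneg (mul_nonneg h1 h2) h3)
    positivity
  calc (ℓ / r) ^ δ₁ * (t * r + (t * r)⁻¹) ^ (-θ) * (f₁ * f₂ * f₃) / r
      ≤ (ℓ / r) ^ δ₁ * ((r / ℓ) ^ θ * (t * ℓ + (t * ℓ)⁻¹) ^ (-θ)) * (g₁ * g₂ * g₃) / r :=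
        div_le_div_of_nonneg_right hnum hr0.le
    _ = g₁ * g₂ * g₃ * (t * ℓ + (t * ℓ)⁻¹) ^ (-θ) * (ℓ ^ (δ₁ - θ) * r ^ (-(δ₁ - θ + 1))) := by
        rw [← hid]; ring

-- inner integral estimate with case analysis
lemma inner_le {ε δ₀ ℓ L D : ℝ} (hε : 0 < ε) (hδ₀ : 0 < δ₀) (hδ₀ε : δ₀ ≤ ε) (hδ₀1 : δ₀ ≤ 1)
    (hℓ : 0 < ℓ) (hL : 0 < L) (hD : 0 ≤ D) (y : ℝ) {S : Set ℝ} (hSm : MeasurableSet S)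
    (hvol : volume S ≤ ENNReal.ofReal L) (hS : ∀ x ∈ S, max ℓ D ≤ |x - y|) :
    ∫⁻ x in S, ENNReal.ofReal (ℓ ^ ε * |x - y| ^ (-(ε + 1)))
      ≤ ENNReal.ofReal ((4 / ε + 2) * (1 + D / L) ^ (-δ₀)) := by
  set R := max ℓ D with hRdef
  have hR : 0 < R := lt_of_lt_of_le hℓ (le_max_left _ _)
  have hℓR : ℓ ≤ R := le_max_left _ _
  have hDR : D ≤ R := le_max_right _ _
  have hιpos : (0:ℝ) < 1 + D / L := by positivity
  have hℓε : (0:ℝ) ≤ ℓ ^ ε := Real.rpow_nonneg hℓ.le _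
  have hAbound : ∫⁻ x in S, ENNReal.ofReal (ℓ ^ ε * |x - y| ^ (-(ε + 1)))
      ≤ ENNReal.ofReal (2 * ℓ ^ ε * (R ^ (-ε) / ε)) :=
    side_bound hℓε hε hR y hSm hS
  have hℓRε : ℓ ^ ε * R ^ (-ε) ≤ 1 := by
    rw [Real.rpow_neg hR.le]
    have h1 : ℓ ^ ε ≤ R ^ ε := Real.rpow_le_rpow hℓ.le hℓR hε.le
    have h2 : (0:ℝ) < R ^ ε := Real.rpow_pos_of_pos hR _
    calc ℓ ^ ε * (R ^ ε)⁻¹ ≤ R ^ ε * (R ^ ε)⁻¹ :=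
          mul_le_mul_of_nonneg_right h1 (by positivity)
      _ = 1 := mul_inv_cancel₀ h2.ne'
  have h2δ : (1:ℝ) / 2 ≤ (2:ℝ) ^ (-δ₀) := by
    have := Real.rpow_le_rpow_of_exponent_le one_le_two (by linarith : (-1:ℝ) ≤ -δ₀)
    rwa [Real.rpow_neg_one, show ((2:ℝ))⁻¹ = 1 / 2 by norm_num] at this
  have hBnn : (0:ℝ) ≤ (1 + D / L) ^ (-δ₀) := Real.rpow_nonneg hιpos.le _
  rcases le_or_gt D L with hDL | hDL
  · -- D ≤ L : use bound (A), ι ≤ 2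
    refine hAbound.trans (ENNReal.ofReal_le_ofReal ?_)
    have hι2 : 1 + D / L ≤ 2 := by
      have : D / L ≤ 1 := div_le_one_of_le₀ hDL hL.le
      linarith
    have hB : (1:ℝ) / 2 ≤ (1 + D / L) ^ (-δ₀) :=
      h2δ.trans (Real.rpow_le_rpow_of_nonpos hιpos hι2 (neg_nonpos.mpr hδ₀.le))
    have l1 : 2 * ℓ ^ ε * (R ^ (-ε) / ε) = ℓ ^ ε * R ^ (-ε) * (2 / ε) := by ring
    have l2 : ℓ ^ ε * R ^ (-ε) * (2 / ε) ≤ 1 * (2 / ε) :=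
      mul_le_mul_of_nonneg_right hℓRε (by positivity)
    have l4 : (4 / ε + 2) * (1 / 2) ≤ (4 / ε + 2) * ((1 + D / L) ^ (-δ₀)) :=
      mul_le_mul_of_nonneg_left hB (by positivity)
    have l3 : (1:ℝ) * (2 / ε) ≤ (4 / ε + 2) * (1 / 2) := by
      have h : (4 / ε + 2) * (1 / 2) = 2 / ε + 1 := by ring
      rw [h, one_mul]; linarith
    linarith
  · -- L < D
    have hDpos : 0 < D := lt_trans hL hDL
    have hLD1 : L / D ≤ 1 := div_le_one_of_le₀ hDL.le hDpos.le
    have hLDpos : 0 < L / D := by positivity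
    have hB2 : (L / D) ^ δ₀ ≤ 2 * (1 + D / L) ^ (-δ₀) := by
      have hι2 : 1 + D / L ≤ 2 * (D / L) := by
        have : (1:ℝ) ≤ D / L := (one_le_div hL).2 hDL.le
        linarith
      have k1 : (2 * (D / L)) ^ (-δ₀) ≤ (1 + D / L) ^ (-δ₀) :=
        Real.rpow_le_rpow_of_nonpos hιpos hι2 (neg_nonpos.mpr hδ₀.le)
      have k2 : (2 * (D / L)) ^ (-δ₀) = (2:ℝ) ^ (-δ₀) * (D / L) ^ (-δ₀) :=
        Real.mul_rpow (by norm_num) (by positivity)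
      have k3 : (D / L) ^ (-δ₀) = (L / D) ^ δ₀ := by
        rw [Real.rpow_neg (by positivity), ← Real.inv_rpow (by positivity), inv_div]
      have k4 : (1 / 2) * (L / D) ^ δ₀ ≤ (2:ℝ) ^ (-δ₀) * (L / D) ^ δ₀ :=
        mul_le_mul_of_nonneg_right h2δ (Real.rpow_nonneg hLDpos.le _)
      rw [k2, k3] at k1
      linarith
    rcases le_or_gt ℓ L with hℓL | hLℓ
    · -- ℓ ≤ L < D : R = D, use bound (A)
      have hRD : R = D := max_eq_right (hℓL.trans hDL.le)
      refine hAbound.trans (ENNReal.ofReal_le_ofReal ?_)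
      rw [hRD]
      have m1 : ℓ ^ ε * D ^ (-ε) = (ℓ / D) ^ ε := by
        rw [Real.div_rpow hℓ.le hDpos.le, Real.rpow_neg hDpos.le, div_eq_mul_inv]
      have m2 : (ℓ / D) ^ ε ≤ (ℓ / D) ^ δ₀ :=
        Real.rpow_le_rpow_of_exponent_ge (by positivity)
          (div_le_one_of_le₀ (hℓL.trans hDL.le) hDpos.le) hδ₀ε
      have m3 : (ℓ / D) ^ δ₀ ≤ (L / D) ^ δ₀ :=
        Real.rpow_le_rpow (by positivity) (div_le_div_of_nonneg_right hℓL hDpos.le) hδ₀.le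
      have m4 : (ℓ / D) ^ ε ≤ 2 * (1 + D / L) ^ (-δ₀) := le_trans (m2.trans m3) hB2
      have l1 : 2 * ℓ ^ ε * (D ^ (-ε) / ε) = (2 / ε) * (ℓ ^ ε * D ^ (-ε)) := by ring
      rw [l1, m1]
      calc (2 / ε) * (ℓ / D) ^ ε ≤ (2 / ε) * (2 * (1 + D / L) ^ (-δ₀)) :=
            mul_le_mul_of_nonneg_left m4 (by positivity)
        _ = (4 / ε) * (1 + D / L) ^ (-δ₀) := by ring
        _ ≤ (4 / ε + 2) * (1 + D / L) ^ (-δ₀) := by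
            have h : (0:ℝ) ≤ 2 * (1 + D / L) ^ (-δ₀) := by positivity
            nlinarith [h]
    · -- L < ℓ : use bound (B)
      have hBbound : ∫⁻ x in S, ENNReal.ofReal (ℓ ^ ε * |x - y| ^ (-(ε + 1)))
          ≤ ENNReal.ofReal (ℓ ^ ε * R ^ (-(ε + 1)) * L) := by
        calc ∫⁻ x in S, ENNReal.ofReal (ℓ ^ ε * |x - y| ^ (-(ε + 1)))
            ≤ ∫⁻ _x in S, ENNReal.ofReal (ℓ ^ ε * R ^ (-(ε + 1))) := by
              refine setLIntegral_mono' hSm (fun x hx => ENNReal.ofReal_le_ofReal ?_)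
              exact mul_le_mul_of_nonneg_left
                (Real.rpow_le_rpow_of_nonpos hR (hS x hx) (by linarith)) hℓε
          _ = ENNReal.ofReal (ℓ ^ ε * R ^ (-(ε + 1))) * volume S := setLIntegral_const S _
          _ ≤ ENNReal.ofReal (ℓ ^ ε * R ^ (-(ε + 1))) * ENNReal.ofReal L :=
              mul_le_mul_right hvol _
          _ = ENNReal.ofReal (ℓ ^ ε * R ^ (-(ε + 1)) * L) :=
              (ENNReal.ofReal_mul (by positivity)).symm
      refine hBbound.trans (ENNReal.ofReal_le_ofReal ?_)
      have n1 : R ^ (-(ε + 1)) = R ^ (-ε) * R⁻¹ := by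
        rw [show -(ε + 1) = -ε + (-1) by ring, Real.rpow_add hR, Real.rpow_neg_one]
      have n2 : ℓ ^ ε * R ^ (-(ε + 1)) * L = (ℓ ^ ε * R ^ (-ε)) * (L / R) := by
        rw [n1]; ring
      have n3 : L / R ≤ L / D := div_le_div_of_nonneg_left hL.le hDpos hDR
      have n4 : L / D ≤ (L / D) ^ δ₀ := by
        have := Real.rpow_le_rpow_of_exponent_ge hLDpos hLD1 hδ₀1
        rwa [Real.rpow_one] at this
      have n5 : (0:ℝ) ≤ L / R := by positivity
      have n6 : ℓ ^ ε * R ^ (-ε) * (L / R) ≤ 1 * (L / D) := by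
        apply mul_le_mul hℓRε n3 n5 zero_le_one
      rw [n2]
      calc ℓ ^ ε * R ^ (-ε) * (L / R) ≤ 1 * (L / D) := n6
        _ = L / D := one_mul _
        _ ≤ (L / D) ^ δ₀ := n4
        _ ≤ 2 * (1 + D / L) ^ (-δ₀) := hB2
        _ ≤ (4 / ε + 2) * (1 + D / L) ^ (-δ₀) := by
            have h : (0:ℝ) ≤ (4 / ε) * (1 + D / L) ^ (-δ₀) := by positivity
            nlinarith [h]



/-- Hölder-decay integral estimate (Lemma lem:PP, part (4), `𝒬¹`): for dyadic intervals
`I = (a,b]`, `J = (c,d]` with `rd(I,J) < 1`, `ird(I,J) := 1 + dist(I,J)/ℓ(J)`,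
`θ ∈ (0,1)`, `θ < δ₁ ≤ 1`, `δ₀ := min{θ, δ₁ - θ}`:
`∫_I ∫_{J∖3I} (ℓI/|x-y|)^{δ₁} (t|x-y| + 1/(t|x-y|))^{-θ} F(x,y)/|x-y| dx dy
 ≲ F₁(ℓI) F₂(ℓI) F̃₃(I∨J) · ird(I,J)^{-δ₀} · |I| · (t|I| + (t|I|)⁻¹)^{-θ}`,
with the constant independent of `t, I, J`. -/
theorem stmt14 (θ δ₁ θ₃ : ℝ) (hθ : 0 < θ) (hθδ : θ < δ₁) (hδ₁ : δ₁ ≤ 1)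
    (hθ₃ : θ₃ ∈ Set.Ioo (0:ℝ) 1)
    (F₁ F₂ F₃ : ℝ → ℝ)
    (h₁0 : ∀ t, 0 ≤ t → 0 ≤ F₁ t) (h₂0 : ∀ t, 0 ≤ t → 0 ≤ F₂ t)
    (h₃0 : ∀ t, 0 ≤ t → 0 ≤ F₃ t)
    (h₁m : MonotoneOn F₁ (Ici 0)) (h₂m : AntitoneOn F₂ (Ici 0))
    (h₃m : AntitoneOn F₃ (Ici 0))
    (hb : ∃ M, ∀ t, 0 ≤ t → F₁ t ≤ M ∧ F₂ t ≤ M ∧ F₃ t ≤ M) :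
    ∃ C : ℝ, 0 < C ∧ ∀ t a b c d : ℝ, 0 < t →
      (∃ kI nI : ℤ, a = (nI : ℝ) * 2 ^ (kI : ℝ) ∧ b = ((nI : ℝ) + 1) * 2 ^ (kI : ℝ)) →
      (∃ kJ nJ : ℤ, c = (nJ : ℝ) * 2 ^ (kJ : ℝ) ∧ d = ((nJ : ℝ) + 1) * 2 ^ (kJ : ℝ)) →
      relDist a b c d < 1 →
      (∫⁻ y in Ioc a b, ∫⁻ x in Ioc c d \ Ioc (2 * a - b) (2 * b - a),
          ENNReal.ofReal
            (((b - a) / |x - y|) ^ δ₁ * (t * |x - y| + (t * |x - y|)⁻¹) ^ (-θ) *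
              (F₁ |y - (a + b) / 2| * F₂ |x - y| *
                F₃ (1 + |x + y| / (1 + |x - y|))) / |x - y|))
        ≤ ENNReal.ofReal
            (C * (F₁ (b - a) * F₂ (b - a) * dilDecay θ₃ F₃ (min a c) (max b d)) *
              (1 + intervalDist a b c d / (d - c)) ^ (-(min θ (δ₁ - θ))) *
              (b - a) * (t * (b - a) + (t * (b - a))⁻¹) ^ (-θ)) := by
  obtain ⟨M, hM⟩ := hb
  have hε : 0 < δ₁ - θ := by linarith
  refine ⟨4 / (δ₁ - θ) + 2, by positivity, ?_⟩
  intro t a b c d ht hIdy hJdy _hrd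
  obtain ⟨kI, nI, ha, hb2⟩ := hIdy
  obtain ⟨kJ, nJ, hc, hd2⟩ := hJdy
  have hℓ : 0 < b - a := by
    rw [ha, hb2]
    have := Real.rpow_pos_of_pos two_pos (kI : ℝ)
    nlinarith
  have hL : 0 < d - c := by
    rw [hc, hd2]
    have := Real.rpow_pos_of_pos two_pos (kJ : ℝ)
    nlinarith
  set D := intervalDist a b c d with hDdef
  have hD0 : 0 ≤ D := le_max_left 0 _
  set S := Ioc c d \ Ioc (2 * a - b) (2 * b - a) with hSdef
  have hSm : MeasurableSet S := measurableSet_Ioc.diff measurableSet_Ioc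
  have hvol : volume S ≤ ENNReal.ofReal (d - c) :=
    (measure_mono diff_subset).trans_eq Real.volume_Ioc
  have hδ₀ : 0 < min θ (δ₁ - θ) := lt_min hθ hε
  have hδ₀ε : min θ (δ₁ - θ) ≤ δ₁ - θ := min_le_right _ _
  have hδ₀1 : min θ (δ₁ - θ) ≤ 1 := (min_le_left _ _).trans (by linarith)
  have hsep : ∀ y ∈ Ioc a b, ∀ x ∈ S, max (b - a) D ≤ |x - y| := by
    intro y hy x hx
    obtain ⟨hxJ, hx3⟩ := hx
    have hJ1 : c < x := hxJ.1
    have hJ2 : x ≤ d := hxJ.2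
    have hy1 : a < y := hy.1
    have hy2 : y ≤ b := hy.2
    have habs1 : x - y ≤ |x - y| := le_abs_self _
    have habs2 : y - x ≤ |x - y| := by rw [abs_sub_comm]; exact le_abs_self _
    have hsep1 : b - a ≤ |x - y| := by
      rcases not_and_or.1 (fun h => hx3 ⟨h.1, h.2⟩) with h | h
      · push_neg at h; linarith
      · push_neg at h; linarith
    refine max_le hsep1 ?_
    rw [hDdef]
    simp only [intervalDist]
    refine max_le (abs_nonneg _) (max_le (by linarith) (by linarith))
  have hPW : 0 ≤ F₁ (b - a) * F₂ (b - a) * F₃ (rdUnit (min a c) (max b d)) *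
      (t * (b - a) + (t * (b - a))⁻¹) ^ (-θ) := by
    have i1 := h₁0 (b - a) hℓ.le
    have i2 := h₂0 (b - a) hℓ.le
    have i3 := h₃0 (rdUnit (min a c) (max b d)) (rdUnit_nonneg _ _)
    have i4 : (0:ℝ) ≤ (t * (b - a) + (t * (b - a))⁻¹) ^ (-θ) :=
      Real.rpow_nonneg (by positivity) _
    positivity
  -- pointwise bound
  have hpt : ∀ y ∈ Ioc a b, ∀ x ∈ S,
      ENNReal.ofReal
        (((b - a) / |x - y|) ^ δ₁ * (t * |x - y| + (t * |x - y|)⁻¹) ^ (-θ) *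
          (F₁ |y - (a + b) / 2| * F₂ |x - y| *
            F₃ (1 + |x + y| / (1 + |x - y|))) / |x - y|)
      ≤ ENNReal.ofReal (F₁ (b - a) * F₂ (b - a) * F₃ (rdUnit (min a c) (max b d)) *
            (t * (b - a) + (t * (b - a))⁻¹) ^ (-θ)) *
          ENNReal.ofReal ((b - a) ^ (δ₁ - θ) * |x - y| ^ (-(δ₁ - θ + 1))) := by
    intro y hy x hx
    rw [← ENNReal.ofReal_mul hPW]
    apply ENNReal.ofReal_le_ofReal
    have hr : b - a ≤ |x - y| := (le_max_left _ _).trans (hsep y hy x hx)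
    have harg0 : (0:ℝ) ≤ 1 + |x + y| / (1 + |x - y|) := by positivity
    have hyb : |y - (a + b) / 2| ≤ b - a := by
      rw [abs_le]
      constructor <;> [linarith [hy.1, hy.2]; linarith [hy.1, hy.2]]
    have hxK : x ∈ Ioc (min a c) (max b d) :=
      ⟨lt_of_le_of_lt (min_le_right a c) hx.1.1, hx.1.2.trans (le_max_right b d)⟩
    have hyK : y ∈ Ioc (min a c) (max b d) :=
      ⟨lt_of_le_of_lt (min_le_left a c) hy.1, hy.2.trans (le_max_left b d)⟩
    have h1le : F₁ |y - (a + b) / 2| ≤ F₁ (b - a) :=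
      h₁m (mem_Ici.2 (abs_nonneg _)) (mem_Ici.2 hℓ.le) hyb
    have h2le : F₂ |x - y| ≤ F₂ (b - a) :=
      h₂m (mem_Ici.2 hℓ.le) (mem_Ici.2 (abs_nonneg _)) hr
    have h3le : F₃ (1 + |x + y| / (1 + |x - y|)) ≤ F₃ (rdUnit (min a c) (max b d)) :=
      h₃m (mem_Ici.2 (rdUnit_nonneg _ _)) (mem_Ici.2 harg0) (rdUnit_le_arg hxK hyK)
    exact pointwise_bound hθ hθδ ht hℓ hr
      (h₁0 _ (abs_nonneg _)) (h₂0 _ (abs_nonneg _)) (h₃0 _ harg0) h1le h2le h3le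
  -- inner integral bound
  have hinner : ∀ y ∈ Ioc a b,
      (∫⁻ x in S, ENNReal.ofReal
        (((b - a) / |x - y|) ^ δ₁ * (t * |x - y| + (t * |x - y|)⁻¹) ^ (-θ) *
          (F₁ |y - (a + b) / 2| * F₂ |x - y| *
            F₃ (1 + |x + y| / (1 + |x - y|))) / |x - y|))
      ≤ ENNReal.ofReal (F₁ (b - a) * F₂ (b - a) * F₃ (rdUnit (min a c) (max b d)) *
            (t * (b - a) + (t * (b - a))⁻¹) ^ (-θ)) *
          ENNReal.ofReal ((4 / (δ₁ - θ) + 2) *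
            (1 + D / (d - c)) ^ (-(min θ (δ₁ - θ)))) := by
    intro y hy
    calc (∫⁻ x in S, ENNReal.ofReal
          (((b - a) / |x - y|) ^ δ₁ * (t * |x - y| + (t * |x - y|)⁻¹) ^ (-θ) *
            (F₁ |y - (a + b) / 2| * F₂ |x - y| *
              F₃ (1 + |x + y| / (1 + |x - y|))) / |x - y|))
        ≤ ∫⁻ x in S,
            ENNReal.ofReal (F₁ (b - a) * F₂ (b - a) * F₃ (rdUnit (min a c) (max b d)) *
              (t * (b - a) + (t * (b - a))⁻¹) ^ (-θ)) *
            ENNReal.ofReal ((b - a) ^ (δ₁ - θ) * |x - y| ^ (-(δ₁ - θ + 1))) :=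
          setLIntegral_mono' hSm (hpt y hy)
      _ = ENNReal.ofReal (F₁ (b - a) * F₂ (b - a) * F₃ (rdUnit (min a c) (max b d)) *
              (t * (b - a) + (t * (b - a))⁻¹) ^ (-θ)) *
            ∫⁻ x in S, ENNReal.ofReal ((b - a) ^ (δ₁ - θ) * |x - y| ^ (-(δ₁ - θ + 1))) :=
          lintegral_const_mul' _ _ ENNReal.ofReal_ne_top
      _ ≤ ENNReal.ofReal (F₁ (b - a) * F₂ (b - a) * F₃ (rdUnit (min a c) (max b d)) *
              (t * (b - a) + (t * (b - a))⁻¹) ^ (-θ)) *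
            ENNReal.ofReal ((4 / (δ₁ - θ) + 2) *
              (1 + D / (d - c)) ^ (-(min θ (δ₁ - θ)))) :=
          mul_le_mul_right
            (inner_le hε hδ₀ hδ₀ε hδ₀1 hℓ hL hD0 y hSm hvol (hsep y hy)) _
  calc (∫⁻ y in Ioc a b, ∫⁻ x in S,
        ENNReal.ofReal
          (((b - a) / |x - y|) ^ δ₁ * (t * |x - y| + (t * |x - y|)⁻¹) ^ (-θ) *
            (F₁ |y - (a + b) / 2| * F₂ |x - y| *
              F₃ (1 + |x + y| / (1 + |x - y|))) / |x - y|))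
      ≤ ∫⁻ _y in Ioc a b,
          ENNReal.ofReal (F₁ (b - a) * F₂ (b - a) * F₃ (rdUnit (min a c) (max b d)) *
              (t * (b - a) + (t * (b - a))⁻¹) ^ (-θ)) *
            ENNReal.ofReal ((4 / (δ₁ - θ) + 2) *
              (1 + D / (d - c)) ^ (-(min θ (δ₁ - θ)))) :=
        setLIntegral_mono' measurableSet_Ioc hinner
    _ = (ENNReal.ofReal (F₁ (b - a) * F₂ (b - a) * F₃ (rdUnit (min a c) (max b d)) *
            (t * (b - a) + (t * (b - a))⁻¹) ^ (-θ)) *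
          ENNReal.ofReal ((4 / (δ₁ - θ) + 2) *
            (1 + D / (d - c)) ^ (-(min θ (δ₁ - θ))))) * volume (Ioc a b) :=
        setLIntegral_const _ _
    _ ≤ ENNReal.ofReal
          ((4 / (δ₁ - θ) + 2) *
            (F₁ (b - a) * F₂ (b - a) * dilDecay θ₃ F₃ (min a c) (max b d)) *
            (1 + D / (d - c)) ^ (-(min θ (δ₁ - θ))) *
            (b - a) * (t * (b - a) + (t * (b - a))⁻¹) ^ (-θ)) := by
        rw [Real.volume_Ioc, ← ENNReal.ofReal_mul hPW,
          ← ENNReal.ofReal_mul (by positivity)]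
        apply ENNReal.ofReal_le_ofReal
        have hdil : F₃ (rdUnit (min a c) (max b d)) ≤ dilDecay θ₃ F₃ (min a c) (max b d) :=
          F₃_le_dilDecay hθ₃ h₃0 (fun s hs => (hM s hs).2.2) _ _
        have h12 : 0 ≤ F₁ (b - a) * F₂ (b - a) :=
          mul_nonneg (h₁0 _ hℓ.le) (h₂0 _ hℓ.le)
        have hPle : F₁ (b - a) * F₂ (b - a) * F₃ (rdUnit (min a c) (max b d))
            ≤ F₁ (b - a) * F₂ (b - a) * dilDecay θ₃ F₃ (min a c) (max b d) :=
          mul_le_mul_of_nonneg_left hdil h12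
        have hWnn : (0:ℝ) ≤ (t * (b - a) + (t * (b - a))⁻¹) ^ (-θ) :=
          Real.rpow_nonneg (by positivity) _
        have hrest : (0:ℝ) ≤ (4 / (δ₁ - θ) + 2) *
            (1 + D / (d - c)) ^ (-(min θ (δ₁ - θ))) * (b - a) *
            (t * (b - a) + (t * (b - a))⁻¹) ^ (-θ) := by
          have h9 : (0:ℝ) ≤ (1 + D / (d - c)) ^ (-(min θ (δ₁ - θ))) :=
            Real.rpow_nonneg (by positivity) _
          positivity
        calc F₁ (b - a) * F₂ (b - a) * F₃ (rdUnit (min a c) (max b d)) *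
              (t * (b - a) + (t * (b - a))⁻¹) ^ (-θ) *
              ((4 / (δ₁ - θ) + 2) * (1 + D / (d - c)) ^ (-(min θ (δ₁ - θ)))) * (b - a)
            = ((4 / (δ₁ - θ) + 2) * (1 + D / (d - c)) ^ (-(min θ (δ₁ - θ))) * (b - a) *
                (t * (b - a) + (t * (b - a))⁻¹) ^ (-θ)) *
              (F₁ (b - a) * F₂ (b - a) * F₃ (rdUnit (min a c) (max b d))) := by ring
          _ ≤ ((4 / (δ₁ - θ) + 2) * (1 + D / (d - c)) ^ (-(min θ (δ₁ - θ))) * (b - a) *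
                (t * (b - a) + (t * (b - a))⁻¹) ^ (-θ)) *
              (F₁ (b - a) * F₂ (b - a) * dilDecay θ₃ F₃ (min a c) (max b d)) :=
            mul_le_mul_of_nonneg_left hPle hrest
          _ = (4 / (δ₁ - θ) + 2) *
              (F₁ (b - a) * F₂ (b - a) * dilDecay θ₃ F₃ (min a c) (max b d)) *
              (1 + D / (d - c)) ^ (-(min θ (δ₁ - θ))) *
              (b - a) * (t * (b - a) + (t * (b - a))⁻¹) ^ (-θ) := by ring
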